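/- Let ε ∈ [0,1], and let Y = (Y_0,Y_1,…,Y_m) and W = (W_0,W_1,…,W_m) be multinomial random vectors with T trials and probability vectors (p^Y_0,…,p^Y_m) and (p^W_0,…,p^W_m), respectively. If p^W_i ≥ (1−ε)·p^Y_i for every i ∈ {1,…,m}, then E(max_{1≤i≤m} W_i) ≥ (1−ε)·E(max_{1≤i≤m} Y_i). -/
import Mathlib


open Finset

/-- `E(max_{1 ≤ i ≤ m} X_i)` where `(X_0, X_1, …, X_m)` is a multinomial random vector with
`T` trials and probability vector `p`: each of `T` independent trials results in outcome
`i : Fin (m+1)` with probability `p i`, and `X_i` counts the trials with outcome `i`. -/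
noncomputable def expMaxPos (T m : ℕ) (p : Fin (m + 1) → ℝ) : ℝ :=
  ∑ f : Fin T → Fin (m + 1),
    (∏ t, p (f t)) *
      (((Finset.univ.erase (0 : Fin (m + 1))).sup
          fun i => (Finset.univ.filter fun t => f t = i).card : ℕ) : ℝ)

private lemma prod_sum_eq_sum_prod {T m : ℕ} (F : Fin T → Fin (m + 1) → ℝ) :
    (∏ t, ∑ j, F t j) = ∑ g : Fin T → Fin (m + 1), ∏ t, F t (g t) := by
  rw [Finset.prod_univ_sum, Fintype.piFinset_univ]

private lemma key_lemma {T m : ℕ} (ε : ℝ) (pY : Fin (m + 1) → ℝ)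
    (q : Fin (m + 1) → Fin (m + 1) → ℝ)
    (hq0 : ∀ i j, 0 ≤ q i j) (hrow : ∀ i, ∑ j, q i j = pY i)
    (hdiag : ∀ i, i ≠ 0 → (1 - ε) * pY i ≤ q i i)
    (hpY0 : ∀ i, 0 ≤ pY i)
    (y : Fin T → Fin (m + 1)) :
    (1 - ε) * ((∏ t, pY (y t)) *
        (((Finset.univ.erase (0 : Fin (m + 1))).sup
          fun i => (Finset.univ.filter fun t => y t = i).card : ℕ) : ℝ))
      ≤ ∑ w : Fin T → Fin (m + 1), (∏ t, q (y t) (w t)) *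
        (((Finset.univ.erase (0 : Fin (m + 1))).sup
          fun i => (Finset.univ.filter fun t => w t = i).card : ℕ) : ℝ) := by
  by_cases hne : ((univ : Finset (Fin (m + 1))).erase 0).Nonempty
  · obtain ⟨i₀, hi₀mem, hi₀⟩ := Finset.exists_mem_eq_sup _ hne
      (fun i => (Finset.univ.filter fun t => y t = i).card)
    have hi₀ne : i₀ ≠ 0 := Finset.ne_of_mem_erase hi₀mem
    have count_eq : ∀ (w : Fin T → Fin (m + 1)),
        (((Finset.univ.filter fun t => w t = i₀).card : ℕ) : ℝ)
          = ∑ t, (if w t = i₀ then (1 : ℝ) else 0) := by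
      intro w
      rw [Finset.card_filter]
      push_cast
      rfl
    -- per-t factorization
    have hfac : ∀ t : Fin T,
        (∑ w : Fin T → Fin (m + 1), (∏ t', q (y t') (w t')) * (if w t = i₀ then (1:ℝ) else 0))
          = q (y t) i₀ * ∏ t' ∈ univ.erase t, pY (y t') := by
      intro t
      have hsplit : ∀ w : Fin T → Fin (m + 1),
          (∏ t', q (y t') (w t')) * (if w t = i₀ then (1:ℝ) else 0)
            = ∏ t', (q (y t') (w t') *
                (if t' = t then (if w t' = i₀ then (1:ℝ) else 0) else 1)) := by
        intro w
        rw [Finset.prod_mul_distrib]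
        congr 1
        rw [Finset.prod_ite_eq' univ t (fun t' => if w t' = i₀ then (1:ℝ) else 0)]
        simp
      simp_rw [hsplit]
      rw [← prod_sum_eq_sum_prod (fun t' j => q (y t') j *
            (if t' = t then (if j = i₀ then (1:ℝ) else 0) else 1))]
      rw [← Finset.mul_prod_erase univ _ (mem_univ t)]
      congr 1
      · simp [mul_ite, Finset.sum_ite_eq' univ i₀]
      · refine Finset.prod_congr rfl fun t' ht' => ?_
        have hne' : t' ≠ t := (Finset.mem_erase.mp ht').1
        simp [hne', hrow]
    -- per-t bound
    have hbound : ∀ t : Fin T,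
        (1 - ε) * ((if y t = i₀ then (1:ℝ) else 0) * ∏ t', pY (y t'))
          ≤ q (y t) i₀ * ∏ t' ∈ univ.erase t, pY (y t') := by
      intro t
      have hprodnn : (0:ℝ) ≤ ∏ t' ∈ univ.erase t, pY (y t') :=
        Finset.prod_nonneg fun t' _ => hpY0 _
      by_cases hyt : y t = i₀
      · have h1 : (1 - ε) * pY (y t) ≤ q (y t) i₀ := by
          rw [hyt]; exact hdiag i₀ hi₀ne
        have h2 : (∏ t', pY (y t')) = pY (y t) * ∏ t' ∈ univ.erase t, pY (y t') :=
          (Finset.mul_prod_erase univ _ (mem_univ t)).symm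
        rw [if_pos hyt, one_mul, h2, ← mul_assoc]
        exact mul_le_mul_of_nonneg_right h1 hprodnn
      · rw [if_neg hyt, zero_mul, mul_zero]
        exact mul_nonneg (hq0 _ _) hprodnn
    -- assemble
    calc (1 - ε) * ((∏ t, pY (y t)) *
          (((Finset.univ.erase (0 : Fin (m + 1))).sup
            fun i => (Finset.univ.filter fun t => y t = i).card : ℕ) : ℝ))
        = ∑ t, (1 - ε) * ((if y t = i₀ then (1:ℝ) else 0) * ∏ t', pY (y t')) := by
          rw [hi₀, count_eq y, Finset.mul_sum, Finset.mul_sum]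
          refine Finset.sum_congr rfl fun t _ => ?_
          ring
      _ ≤ ∑ t, q (y t) i₀ * ∏ t' ∈ univ.erase t, pY (y t') :=
          Finset.sum_le_sum fun t _ => hbound t
      _ = ∑ t, ∑ w : Fin T → Fin (m + 1),
            (∏ t', q (y t') (w t')) * (if w t = i₀ then (1:ℝ) else 0) := by
          refine Finset.sum_congr rfl fun t _ => (hfac t).symm
      _ = ∑ w : Fin T → Fin (m + 1), (∏ t', q (y t') (w t')) *
            (((Finset.univ.filter fun t => w t = i₀).card : ℕ) : ℝ) := by
          rw [Finset.sum_comm]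
          refine Finset.sum_congr rfl fun w _ => ?_
          rw [count_eq w, Finset.mul_sum]
      _ ≤ ∑ w : Fin T → Fin (m + 1), (∏ t, q (y t) (w t)) *
            (((Finset.univ.erase (0 : Fin (m + 1))).sup
              fun i => (Finset.univ.filter fun t => w t = i).card : ℕ) : ℝ) := by
          refine Finset.sum_le_sum fun w _ => ?_
          refine mul_le_mul_of_nonneg_left ?_ (Finset.prod_nonneg fun t _ => hq0 _ _)
          exact_mod_cast Nat.cast_le.mpr
            (Finset.le_sup (f := fun i => (Finset.univ.filter fun t => w t = i).card) hi₀mem)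
  · rw [Finset.not_nonempty_iff_eq_empty] at hne
    simp [hne]

/-- Sensitivity of the expected maximum (over coordinates `1,…,m`) of a multinomial
vector with respect to changes in the probability vector: if `pW i ≥ (1-ε) pY i` for
every `i ∈ {1,…,m}`, then `E(max_{1≤i≤m} W_i) ≥ (1-ε) E(max_{1≤i≤m} Y_i)`. -/
theorem multinomial_max_probability_sensitivity
    (ε : ℝ) (hε0 : 0 ≤ ε) (hε1 : ε ≤ 1) (T m : ℕ)
    (pY pW : Fin (m + 1) → ℝ)
    (hY0 : ∀ i, 0 ≤ pY i) (hYsum : ∑ i, pY i = 1)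
    (hW0 : ∀ i, 0 ≤ pW i) (hWsum : ∑ i, pW i = 1)
    (h : ∀ i : Fin (m + 1), i ≠ 0 → (1 - ε) * pY i ≤ pW i) :
    expMaxPos T m pW ≥ (1 - ε) * expMaxPos T m pY := by
  have hY1 : pY 0 ≤ 1 := hYsum ▸ Finset.single_le_sum (fun i _ => hY0 i) (mem_univ 0)
  have hYer : ∑ i ∈ univ.erase (0 : Fin (m+1)), pY i = 1 - pY 0 := by
    have := Finset.add_sum_erase univ pY (mem_univ (0 : Fin (m+1)))
    linarith [this.trans hYsum]
  set s : ℝ := pY 0 + ε * (1 - pY 0) with hs_def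
  by_cases hs : s = 0
  · -- degenerate case: ε = 0 and pW = pY
    have hpY00 : pY 0 = 0 := by
      nlinarith [hY0 0, mul_nonneg hε0 (by linarith : (0:ℝ) ≤ 1 - pY 0)]
    have hε : ε = 0 := by
      have h1 : ε * (1 - pY 0) = 0 := by rw [hs_def] at hs; linarith
      rw [hpY00] at h1; linarith
    have hle : ∀ i ∈ (univ : Finset (Fin (m+1))), pY i ≤ pW i := by
      intro i _
      by_cases hi : i = 0
      · rw [hi, hpY00]; exact hW0 0
      · have := h i hi; rw [hε] at this; linarith
    have heq : ∀ i ∈ (univ : Finset (Fin (m+1))), pY i = pW i :=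
      (Finset.sum_eq_sum_iff_of_le hle).mp (hYsum.trans hWsum.symm)
    have hpq : pW = pY := funext fun i => (heq i (mem_univ i)).symm
    rw [hpq, hε]
    simp
  · have hs_nonneg : (0:ℝ) ≤ s := by
      have := mul_nonneg hε0 (by linarith : (0:ℝ) ≤ 1 - pY 0)
      rw [hs_def]; linarith [hY0 0]
    have hspos : 0 < s := lt_of_le_of_ne hs_nonneg (Ne.symm hs)
    -- the coupling kernel
    set a : Fin (m+1) → ℝ := fun i => if i = 0 then pY 0 else ε * pY i with ha_def
    set c : Fin (m+1) → ℝ :=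
      fun j => pW j - (if j = 0 then 0 else (1 - ε) * pY j) with hc_def
    set q : Fin (m+1) → Fin (m+1) → ℝ :=
      fun i j => (if i = j ∧ i ≠ 0 then (1 - ε) * pY i else 0) + a i * c j / s with hq_def
    have ha0 : ∀ i, 0 ≤ a i := by
      intro i; rw [ha_def]
      by_cases hi : i = 0 <;> simp [hi]
      · exact hY0 0
      · exact mul_nonneg hε0 (hY0 i)
    have hc0 : ∀ j, 0 ≤ c j := by
      intro j; rw [hc_def]
      by_cases hj : j = 0 <;> simp [hj]
      · exact hW0 0
      · exact h j hj
    have hq0 : ∀ i j, 0 ≤ q i j := by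
      intro i j
      have h2 : (0:ℝ) ≤ a i * c j / s := div_nonneg (mul_nonneg (ha0 i) (hc0 j)) hs_nonneg
      simp only [hq_def]
      split
      · exact add_nonneg (mul_nonneg (by linarith) (hY0 i)) h2
      · simpa using h2
    have hsa : ∑ i, a i = s := by
      rw [← Finset.add_sum_erase univ a (mem_univ (0 : Fin (m+1)))]
      have h1 : ∑ i ∈ univ.erase (0 : Fin (m+1)), a i
          = ε * ∑ i ∈ univ.erase (0 : Fin (m+1)), pY i := by
        rw [Finset.mul_sum]
        refine Finset.sum_congr rfl fun i hi => ?_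
        simp only [ha_def]
        rw [if_neg (Finset.ne_of_mem_erase hi)]
      rw [h1, hYer]
      simp only [ha_def, if_pos rfl, hs_def]
    have hsc : ∑ j, c j = s := by
      have h1 : ∑ j, c j = ∑ j, pW j - ∑ j, (if j = 0 then (0:ℝ) else (1 - ε) * pY j) := by
        simp only [hc_def]
        rw [Finset.sum_sub_distrib]
      have h2 : ∑ j, (if j = 0 then (0:ℝ) else (1 - ε) * pY j)
          = (1 - ε) * (1 - pY 0) := by
        rw [← Finset.add_sum_erase univ _ (mem_univ (0 : Fin (m+1))), if_pos rfl, zero_add,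
          ← hYer, Finset.mul_sum]
        refine Finset.sum_congr rfl fun j hj => ?_
        rw [if_neg (Finset.ne_of_mem_erase hj)]
      rw [h1, h2, hWsum, hs_def]; ring
    have hrow : ∀ i, ∑ j, q i j = pY i := by
      intro i
      simp only [hq_def]
      rw [Finset.sum_add_distrib]
      have h1 : ∑ j, a i * c j / s = a i := by
        rw [← Finset.sum_div, ← Finset.mul_sum, hsc, mul_div_assoc, div_self hs, mul_one]
      rw [h1]
      by_cases hi : i = 0
      · simp only [hi, ha_def]
        simp
      · have h2 : ∑ j, (if i = j ∧ i ≠ 0 then (1 - ε) * pY i else 0) = (1 - ε) * pY i := by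
          simp [hi, Finset.sum_ite_eq]
        rw [h2]
        simp only [ha_def, if_neg hi]
        ring
    have hcol : ∀ j, ∑ i, q i j = pW j := by
      intro j
      simp only [hq_def]
      rw [Finset.sum_add_distrib]
      have h1 : ∑ i, a i * c j / s = c j := by
        rw [← Finset.sum_div, ← Finset.sum_mul, hsa, mul_comm, mul_div_assoc, div_self hs,
          mul_one]
      rw [h1]
      by_cases hj : j = 0
      · have h2 : ∑ i, (if i = j ∧ i ≠ 0 then (1 - ε) * pY i else 0) = 0 := by
          refine Finset.sum_eq_zero fun i _ => ?_
          rw [if_neg]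
          rintro ⟨rfl, hne⟩
          exact hne hj
        rw [h2, zero_add]
        simp [hc_def, hj]
      · have h2 : ∑ i, (if i = j ∧ i ≠ 0 then (1 - ε) * pY i else 0) = (1 - ε) * pY j := by
          have : ∀ i : Fin (m+1), (i = j ∧ i ≠ 0) = (i = j) := by
            intro i
            by_cases hij : i = j
            · simp [hij, hj]
            · simp [hij]
          simp_rw [this]
          simp [Finset.sum_ite_eq']
        rw [h2]
        simp only [hc_def, if_neg hj]
        ring
    have hdiag : ∀ i, i ≠ 0 → (1 - ε) * pY i ≤ q i i := by
      intro i hi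
      have h2 : (0:ℝ) ≤ a i * c i / s := div_nonneg (mul_nonneg (ha0 i) (hc0 i)) hs_nonneg
      simp [hq_def, hi]
      linarith
    -- assemble
    have hW_eq : ∀ w : Fin T → Fin (m+1),
        (∏ t, pW (w t)) = ∑ y : Fin T → Fin (m+1), ∏ t, q (y t) (w t) := by
      intro w
      calc (∏ t, pW (w t)) = ∏ t, ∑ i, q i (w t) :=
            Finset.prod_congr rfl fun t _ => (hcol (w t)).symm
        _ = ∑ y : Fin T → Fin (m+1), ∏ t, q (y t) (w t) :=
            prod_sum_eq_sum_prod (fun t i => q i (w t))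
    calc expMaxPos T m pW
        = ∑ w : Fin T → Fin (m+1), (∑ y : Fin T → Fin (m+1), ∏ t, q (y t) (w t)) *
            (((Finset.univ.erase (0 : Fin (m + 1))).sup
              fun i => (Finset.univ.filter fun t => w t = i).card : ℕ) : ℝ) := by
          rw [expMaxPos]
          exact Finset.sum_congr rfl fun w _ => by rw [hW_eq w]
      _ = ∑ w : Fin T → Fin (m+1), ∑ y : Fin T → Fin (m+1), (∏ t, q (y t) (w t)) *
            (((Finset.univ.erase (0 : Fin (m + 1))).sup
              fun i => (Finset.univ.filter fun t => w t = i).card : ℕ) : ℝ) := by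
          refine Finset.sum_congr rfl fun w _ => ?_
          rw [Finset.sum_mul]
      _ = ∑ y : Fin T → Fin (m+1), ∑ w : Fin T → Fin (m+1), (∏ t, q (y t) (w t)) *
            (((Finset.univ.erase (0 : Fin (m + 1))).sup
              fun i => (Finset.univ.filter fun t => w t = i).card : ℕ) : ℝ) :=
          Finset.sum_comm
      _ ≥ ∑ y : Fin T → Fin (m+1), (1 - ε) * ((∏ t, pY (y t)) *
            (((Finset.univ.erase (0 : Fin (m + 1))).sup
              fun i => (Finset.univ.filter fun t => y t = i).card : ℕ) : ℝ)) :=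
          Finset.sum_le_sum fun y _ => key_lemma ε pY q hq0 hrow hdiag hY0 y
      _ = (1 - ε) * expMaxPos T m pY := by
          rw [expMaxPos, Finset.mul_sum]
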